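/- Let K be a totally real number field of degree 2 over ℚ with ring of integers 𝓞, let σ be the nontrivial element of Gal(K/ℚ), let 𝔡 be the different ideal of 𝓞 over ℤ, and assume 𝔡 = δ𝓞 for some δ ∈ 𝓞. Let p be a rational prime such that p𝓞 is a prime ideal. Let ψ be a function from the nonzero ideals of 𝓞 to ℂ such that ψ(IJ) = ψ(I)ψ(J) for all nonzero ideals I, J, ψ(I)·ψ(σ(I)) = 1 for every nonzero ideal I, ψ(x𝓞) = 1 for every totally positive x ∈ 𝓞, and ψ(𝔡) = −1. Then for every integer n ≥ 1, the set S_n := {ν ∈ K : ν totally positive, νδ ∈ 𝓞, Tr_{K/ℚ}(ν) = n} is finite, and Σ_{ν ∈ S_n} Σ_{I ∣ (νδ)𝓞, p𝓞 ∤ I} ψ(I) = 0, where the inner sum runs over the nonzero ideals I of 𝓞 dividing (νδ)𝓞 that are not divisible by p𝓞. (This is the vanishing of the n-th Fourier coefficient of the diagonal restriction of the p-stabilised Hilbert Eisenstein series E₁^{(p)}(1, ψ), Lemma 4.3 of the paper.) -/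

import Mathlib

/-!
Write `(νδ) = 𝔭 ^ k * 𝔐` with `𝔭 = p𝓞 ∤ 𝔐`, so that the inner sum for `ν` runs over the divisors
of `𝔐`. As `νδ²` is totally positive and `ψ(𝔡) = -1`, `ψ(𝔐) = ψ((νδ)) = -1`, and pairing `I` with
`𝔐 / I` gives `∑_{I ∣ 𝔐} ψ(I) = -∑_{I ∣ 𝔐} ψ(I)⁻¹`. Since `σ` fixes `𝔡` and `𝔭`, the inner sum
for `σν` runs over the `σ(I)`, `I ∣ 𝔐`, and `ψ(σ(I)) = ψ(I)⁻¹`. Hence the inner sum changes sign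
under `ν ↦ σν`, which permutes `S_n`, and the total vanishes.
-/

open NumberField
open scoped nonZeroDivisors

theorem finsum_mem_neg_distrib' {α G : Type*} [SubtractionCommMonoid G] (s : Set α) (f : α → G) :
    ∑ᶠ a ∈ s, -f a = -∑ᶠ a ∈ s, f a := by
  simp only [finsum_neg_distrib]

theorem finsum_mem_eq_zero_of_map_eq_neg {α R : Type*} [AddCommGroup R] [IsAddTorsionFree R]
    {s : Set α} {e : α → α} (he : Set.BijOn e s s) {f : α → R}
    (hf : ∀ x ∈ s, f (e x) = -f x) : ∑ᶠ x ∈ s, f x = 0 := by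
  rw [← self_eq_neg, ← finsum_mem_neg_distrib']
  exact (finsum_mem_eq_of_bijOn e he fun x hx => (hf x hx).symm).symm

section DivisorSums

variable {α : Type*} [CommMonoidWithZero α]

theorem finsum_mem_dvd_eq_neg_finsum_mem_dvd_inv [IsCancelMulZero α] {F : Type*} [DivisionRing F]
    {ψ : α → F} (hψ : ∀ a b, a ≠ 0 → b ≠ 0 → ψ (a * b) = ψ a * ψ b) {N : α} (hN : N ≠ 0)
    (hψN : ψ N = -1) :
    ∑ᶠ a ∈ {a | a ∣ N}, ψ a = -∑ᶠ a ∈ {a | a ∣ N}, (ψ a)⁻¹ := by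
  classical
  -- `c a` is the complementary divisor `N / a`
  let c : α → α := fun a => if h : a ∣ N then h.choose else 0
  have hc : ∀ a, a ∣ N → N = a * c a := fun a h => by
    simp only [c, dif_pos h]
    exact h.choose_spec
  have hc_dvd : ∀ a, a ∣ N → c a ∣ N := fun a h => Dvd.intro_left a (hc a h).symm
  have hc_ne : ∀ a, a ∣ N → a ≠ 0 := fun a h ha => hN (zero_dvd_iff.mp (ha ▸ h))
  have hcc : ∀ a, a ∣ N → c (c a) = a := fun a h =>
    mul_left_cancel₀ (hc_ne _ (hc_dvd a h)) <| by
      rw [← hc _ (hc_dvd a h), mul_comm, ← hc a h]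
  have hψc : ∀ a, a ∣ N → ψ a = -(ψ (c a))⁻¹ := fun a h => by
    have h1 : ψ a * ψ (c a) = -1 := by
      rw [← hψ _ _ (hc_ne a h) (hc_ne _ (hc_dvd a h)), ← hc a h, hψN]
    have h2 : ψ (c a) ≠ 0 := fun h0 => by simp [h0] at h1
    rw [← neg_one_mul, ← h1, mul_inv_cancel_right₀ h2]
  have hinv : Set.InvOn c c {a | a ∣ N} {a | a ∣ N} := ⟨hcc, hcc⟩
  rw [← finsum_mem_neg_distrib']
  exact finsum_mem_eq_of_bijOn c (hinv.bijOn hc_dvd hc_dvd) hψc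

theorem apply_pow_mul_eq_of_apply_eq_one [NoZeroDivisors α] {M : Type*} [Monoid M] {ψ : α → M}
    (hψ : ∀ a b, a ≠ 0 → b ≠ 0 → ψ (a * b) = ψ a * ψ b) {p : α} (hp : p ≠ 0)
    (hψp : ψ p = 1) (k : ℕ) {m : α} (hm : m ≠ 0) : ψ (p ^ k * m) = ψ m := by
  induction k generalizing m with
  | zero => rw [pow_zero, one_mul]
  | succ k ih =>
    rw [pow_succ, mul_assoc, ih (mul_ne_zero hp hm), hψ _ _ hp hm, hψp, one_mul]

theorem setOf_dvd_pow_mul_and_not_dvd [UniqueFactorizationMonoid α] {p m : α} (hp : Prime p)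
    (hm : ¬p ∣ m) (k : ℕ) : {a | a ∣ p ^ k * m ∧ ¬p ∣ a} = {a | a ∣ m} := by
  ext a
  refine ⟨fun ⟨ha, hpa⟩ => ?_, fun ha => ⟨ha.mul_left _, fun hpa => hm (hpa.trans ha)⟩⟩
  refine UniqueFactorizationMonoid.dvd_of_dvd_mul_right_of_no_prime_factors
    (fun h0 => hpa (h0 ▸ dvd_zero p)) (fun hda hdp hd => hpa ?_) ha
  exact (hd.associated_of_dvd hp (hd.dvd_of_dvd_pow hdp)).symm.dvd.trans hda

end DivisorSums

theorem Ideal.setOf_dvd_map_eq_image {R S : Type*} [CommSemiring R] [CommSemiring S]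
    (e : R ≃+* S) (M : Ideal R) :
    {I : Ideal S | I ∣ M.map (e : R →+* S)} = Ideal.map (e : R →+* S) '' {I | I ∣ M} := by
  ext I
  refine ⟨fun hI => ⟨I.map (e.symm : S →+* R), ?_, ?_⟩, ?_⟩
  · simpa using map_dvd (Ideal.mapHom (e.symm : S →+* R)) hI
  · simpa using Ideal.map_of_equiv (I := I) e.symm
  · rintro ⟨J, hJ, rfl⟩
    exact map_dvd (Ideal.mapHom (e : R →+* S)) hJ

section DedekindDomain

variable {R F : Type*} [CommRing R] [IsDedekindDomain R] [DivisionRing F] {ψ : Ideal R → F}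

theorem finsum_dvd_map_and_not_dvd_eq_neg
    (hψmul : ∀ I J : Ideal R, I ≠ ⊥ → J ≠ ⊥ → ψ (I * J) = ψ I * ψ J) (e : R ≃+* R)
    (hψe : ∀ I : Ideal R, I ≠ ⊥ → ψ I * ψ (I.map (e : R →+* R)) = 1)
    {P : Ideal R} (hP : Prime P) (hPe : P.map (e : R →+* R) = P) (hψP : ψ P = 1)
    {N : Ideal R} (hN : N ≠ ⊥) (hψN : ψ N = -1) :
    ∑ᶠ I ∈ {I | I ∣ N.map (e : R →+* R) ∧ ¬P ∣ I}, ψ I =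
      -∑ᶠ I ∈ {I | I ∣ N ∧ ¬P ∣ I}, ψ I := by
  obtain ⟨M, hNM, hPM⟩ := (FiniteMultiplicity.of_prime_left hP hN).exists_eq_pow_mul_and_not_dvd
  have hM : M ≠ ⊥ := by rintro rfl; exact hPM (dvd_zero P)
  have hψM : ψ M = -1 := by
    rw [← hψN, hNM, apply_pow_mul_eq_of_apply_eq_one hψmul hP.ne_zero hψP _ hM]
  have hPeM : ¬P ∣ M.map (e : R →+* R) := fun h => hPM <| by
    have h' := map_dvd (Ideal.mapHom (e.symm : R →+* R)) h
    rwa [Ideal.mapHom_apply, Ideal.mapHom_apply, ← hPe, Ideal.map_of_equiv,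
      Ideal.map_of_equiv] at h'
  have hinj : Set.InjOn (Ideal.map (e : R →+* R)) {I | I ∣ M} := fun I _ J _ hIJ => by
    simpa using congrArg (Ideal.map (e.symm : R →+* R)) hIJ
  rw [hNM, Ideal.map_mul, Ideal.map_pow, hPe, setOf_dvd_pow_mul_and_not_dvd hP hPeM,
    setOf_dvd_pow_mul_and_not_dvd hP hPM, Ideal.setOf_dvd_map_eq_image, finsum_mem_image hinj,
    finsum_mem_dvd_eq_neg_finsum_mem_dvd_inv hψmul hM hψM, neg_neg]
  refine finsum_mem_congr rfl fun I hI => eq_inv_of_mul_eq_one_right (hψe I ?_)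
  rintro rfl
  exact hM (zero_dvd_iff.mp hI)

end DedekindDomain

theorem isReal_of_forall_im_eq_zero {K : Type*} [Field K] {φ : K →+* ℂ}
    (h : ∀ x, (φ x).im = 0) : ComplexEmbedding.IsReal φ :=
  ComplexEmbedding.isReal_iff.mpr (RingHom.ext fun x => Complex.conj_eq_iff_im.mpr (h x))

theorem setOf_exists_dvd_span_and_not_dvd_eq {K : Type*} [Field K] {δ : 𝓞 K} (P : Ideal (𝓞 K))
    {ν : K} {m : 𝓞 K} (hm : (m : K) = ν * δ) :
    {I : Ideal (𝓞 K) | I ≠ ⊥ ∧ (∃ m : 𝓞 K, (m : K) = ν * δ ∧ I ∣ Ideal.span {m}) ∧ ¬P ∣ I} =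
      {I | I ∣ Ideal.span {m} ∧ ¬P ∣ I} := by
  ext I
  refine ⟨fun ⟨_, ⟨m', hm', hI⟩, hPI⟩ => ⟨?_, hPI⟩, fun ⟨hI, hPI⟩ => ⟨?_, ⟨m, hm, hI⟩, hPI⟩⟩
  · rwa [← RingOfIntegers.ext (hm'.trans hm.symm)]
  · rintro rfl
    exact hPI (dvd_zero P)

section NumberField

variable {K : Type*} [Field K] [NumberField K]

theorem norm_le_trace_of_forall_pos (htr : ∀ φ : K →+* ℂ, ∀ x, (φ x).im = 0) {ν : K}
    (hν : ∀ φ : K →+* ℝ, 0 < φ ν) (φ : K →+* ℂ) : ‖φ ν‖ ≤ (Algebra.trace ℚ K ν : ℝ) := by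
  let g : (K →+* ℂ) → ℝ := fun φ => (isReal_of_forall_im_eq_zero (htr φ)).embedding ν
  have hg : ∀ φ : K →+* ℂ, φ ν = g φ := fun φ =>
    (ComplexEmbedding.IsReal.coe_embedding_apply _ ν).symm
  have htrace : (Algebra.trace ℚ K ν : ℝ) = ∑ φ, g φ := by
    have h := trace_eq_sum_embeddings (E := ℂ) (K := ℚ) (L := K) (x := ν)
    rw [← (RingHom.equivRatAlgHom K ℂ).sum_comp] at h
    simp only [RingHom.equivRatAlgHom_apply, RingHom.toRatAlgHom_apply, hg, eq_ratCast] at h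
    exact_mod_cast h
  rw [htrace, hg, Complex.norm_real, Real.norm_of_nonneg (hν _).le]
  exact Finset.single_le_sum (f := g) (fun φ _ => (hν _).le) (Finset.mem_univ φ)

theorem ne_zero_of_forall_pos (htr : ∀ φ : K →+* ℂ, ∀ x, (φ x).im = 0) {ν : K}
    (hν : ∀ φ : K →+* ℝ, 0 < φ ν) : ν ≠ 0 := by
  rintro rfl
  obtain ⟨φ⟩ : Nonempty (K →+* ℂ) := inferInstance
  exact (hν (isReal_of_forall_im_eq_zero (htr φ)).embedding).ne (map_zero _).symm

def totallyPosOfTrace (δ : 𝓞 K) (t : ℚ) : Set K :=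
  {ν | (∀ φ : K →+* ℝ, 0 < φ ν) ∧ (∃ m : 𝓞 K, (m : K) = ν * δ) ∧ Algebra.trace ℚ K ν = t}

theorem finite_totallyPosOfTrace (htr : ∀ φ : K →+* ℂ, ∀ x, (φ x).im = 0) {δ : 𝓞 K}
    (hδ : δ ≠ 0) (t : ℚ) : (totallyPosOfTrace δ t).Finite := by
  refine Set.Finite.of_finite_image (f := (· * (δ : K))) ?_
    (mul_left_injective₀ (by simpa using hδ)).injOn
  refine (Embeddings.finite_of_norm_le K ℂ (t * ∑ φ : K →+* ℂ, ‖φ δ‖)).subset ?_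
  rintro - ⟨ν, ⟨hpos, ⟨m, hm⟩, htrace⟩, rfl⟩
  refine ⟨(hm ▸ m.isIntegral_coe : IsIntegral ℤ (ν * δ)), fun φ => ?_⟩
  have hν : ‖φ ν‖ ≤ t := htrace ▸ norm_le_trace_of_forall_pos htr hpos φ
  rw [map_mul, norm_mul]
  exact mul_le_mul hν (Finset.single_le_sum (f := fun φ : K →+* ℂ => ‖φ δ‖)
    (fun _ _ => norm_nonneg _) (Finset.mem_univ φ)) (norm_nonneg _) ((norm_nonneg _).trans hν)

theorem ne_zero_of_differentIdeal_eq_span {δ : 𝓞 K}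
    (hδ : differentIdeal ℤ (𝓞 K) = Ideal.span {δ}) : δ ≠ 0 := by
  rintro rfl
  exact differentIdeal_ne_bot (by rw [hδ, Ideal.span_singleton_eq_bot])

theorem dual_one_eq_spanSingleton_inv {δ : 𝓞 K} (hδ : differentIdeal ℤ (𝓞 K) = Ideal.span {δ}) :
    FractionalIdeal.dual ℤ ℚ (1 : FractionalIdeal (𝓞 K)⁰ K) =
      FractionalIdeal.spanSingleton (𝓞 K)⁰ (δ : K)⁻¹ := by
  have h := coeIdeal_differentIdeal ℤ ℚ K (𝓞 K)
  rw [hδ, FractionalIdeal.coeIdeal_span_singleton] at h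
  rw [← inv_inv (FractionalIdeal.dual _ _ _), ← h, FractionalIdeal.spanSingleton_inv]

theorem mem_dual_one_iff {δ : 𝓞 K} (hδ : differentIdeal ℤ (𝓞 K) = Ideal.span {δ}) {x : K} :
    x ∈ FractionalIdeal.dual ℤ ℚ (1 : FractionalIdeal (𝓞 K)⁰ K) ↔
      ∃ m : 𝓞 K, (m : K) = x * δ := by
  have hδ0 : (δ : K) ≠ 0 := by
    simpa using ne_zero_of_differentIdeal_eq_span hδ
  rw [dual_one_eq_spanSingleton_inv hδ, FractionalIdeal.mem_spanSingleton]
  refine exists_congr fun m => ?_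
  rw [Algebra.smul_def, ← RingOfIntegers.coe_eq_algebraMap, ← div_eq_mul_inv, div_eq_iff hδ0]

theorem map_mem_dual_one (σ : K ≃ₐ[ℚ] K) {x : K}
    (hx : x ∈ FractionalIdeal.dual ℤ ℚ (1 : FractionalIdeal (𝓞 K)⁰ K)) :
    σ x ∈ FractionalIdeal.dual ℤ ℚ (1 : FractionalIdeal (𝓞 K)⁰ K) := by
  rw [FractionalIdeal.mem_dual (one_ne_zero : (1 : FractionalIdeal (𝓞 K)⁰ K) ≠ 0)] at hx ⊢
  rintro _ ⟨w, -, rfl⟩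
  have := hx _ ⟨RingOfIntegers.mapRingHom σ.symm w, trivial, rfl⟩
  rw [Algebra.traceForm_apply, ← Algebra.trace_eq_of_algEquiv σ, map_mul] at this
  simpa using this

section Different

variable {δ : 𝓞 K} (hδ : differentIdeal ℤ (𝓞 K) = Ideal.span {δ}) (σ : K ≃ₐ[ℚ] K)
include hδ

theorem exists_coe_eq_map_mul {x : K} (hx : ∃ m : 𝓞 K, (m : K) = x * δ) :
    ∃ m : 𝓞 K, (m : K) = σ x * δ := by
  rw [← mem_dual_one_iff hδ] at hx ⊢
  exact map_mem_dual_one σ hx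

theorem mapRingHom_dvd_self : RingOfIntegers.mapRingHom σ δ ∣ δ := by
  have hδ0 : (δ : K) ≠ 0 := by simpa using ne_zero_of_differentIdeal_eq_span hδ
  obtain ⟨u, hu⟩ := exists_coe_eq_map_mul hδ σ (x := (δ : K)⁻¹) ⟨1, by simp [hδ0]⟩
  refine ⟨u, RingOfIntegers.ext ?_⟩
  have hσδ : σ (δ : K) ≠ 0 := by simpa using hδ0
  simp only [map_mul, RingOfIntegers.mapRingHom_apply, RingHom.coe_coe, hu, map_inv₀]
  field_simp

theorem associated_mapRingHom_self : Associated (RingOfIntegers.mapRingHom σ δ) δ := by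
  refine associated_of_dvd_dvd (mapRingHom_dvd_self hδ σ) ?_
  have h := map_dvd (RingOfIntegers.mapRingHom (σ : K →+* K)) (mapRingHom_dvd_self hδ σ.symm)
  have hσσ : RingOfIntegers.mapRingHom (σ : K →+* K) (RingOfIntegers.mapRingHom σ.symm δ) = δ :=
    RingOfIntegers.ext (σ.apply_symm_apply _)
  rwa [hσσ] at h

theorem span_singleton_eq_map_span_singleton {ν : K} {m m' : 𝓞 K} (hm : (m : K) = ν * δ)
    (hm' : (m' : K) = σ ν * δ) :
    Ideal.span {m'} = (Ideal.span {m}).map (RingOfIntegers.mapRingHom σ) := by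
  rw [Ideal.map_span, Set.image_singleton, Ideal.span_singleton_eq_span_singleton]
  have h : m' * RingOfIntegers.mapRingHom σ δ = RingOfIntegers.mapRingHom σ m * δ :=
    RingOfIntegers.ext <| by
      simp only [map_mul, RingOfIntegers.mapRingHom_apply, RingHom.coe_coe, hm, hm']
      ring
  have hσδ := associated_mapRingHom_self hδ σ
  exact (Associated.of_eq h).of_mul_right hσδ
    (hσδ.ne_zero_iff.mpr (ne_zero_of_differentIdeal_eq_span hδ))

theorem map_mem_totallyPosOfTrace {t : ℚ} {ν : K} (hν : ν ∈ totallyPosOfTrace δ t) :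
    σ ν ∈ totallyPosOfTrace δ t :=
  ⟨fun φ => hν.1 (φ.comp (σ : K →+* K)), exists_coe_eq_map_mul hδ σ hν.2.1,
    (Algebra.trace_eq_of_algEquiv σ ν).trans hν.2.2⟩

theorem bijOn_totallyPosOfTrace (t : ℚ) :
    Set.BijOn σ (totallyPosOfTrace δ t) (totallyPosOfTrace δ t) :=
  ⟨fun _ => map_mem_totallyPosOfTrace hδ σ, σ.injective.injOn,
    fun ν hν => ⟨σ.symm ν, map_mem_totallyPosOfTrace hδ σ.symm hν, σ.apply_symm_apply ν⟩⟩

theorem apply_span_eq_neg_one {F : Type*} [Ring F] {ψ : Ideal (𝓞 K) → F}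
    (hψmul : ∀ I J : Ideal (𝓞 K), I ≠ ⊥ → J ≠ ⊥ → ψ (I * J) = ψ I * ψ J)
    (hψprin : ∀ x : 𝓞 K, (∀ φ : K →+* ℝ, 0 < φ (x : K)) → ψ (Ideal.span {x}) = 1)
    (hψdiff : ψ (differentIdeal ℤ (𝓞 K)) = -1) {ν : K} (hν : ∀ φ : K →+* ℝ, 0 < φ ν)
    {m : 𝓞 K} (hm : (m : K) = ν * δ) (hm0 : m ≠ 0) : ψ (Ideal.span {m}) = -1 := by
  have hδ0 := ne_zero_of_differentIdeal_eq_span hδ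
  have hmδ : ψ (Ideal.span {m * δ}) = 1 := hψprin _ fun φ => by
    have hφδ : φ δ ≠ 0 := by simpa using hδ0
    simpa [hm, mul_assoc] using mul_pos (hν φ) (mul_self_pos.mpr hφδ)
  rw [← Ideal.span_singleton_mul_span_singleton, hψmul _ _ (by simpa using hm0)
    (by simpa using hδ0), ← hδ, hψdiff, mul_neg_one] at hmδ
  exact neg_eq_iff_eq_neg.mp hmδ

end Different

end NumberField

theorem stmt11_general (K : Type*) [Field K] [NumberField K]
    (htotallyreal : ∀ φ : K →+* ℂ, ∀ x : K, (φ x).im = 0)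
    (σ : K ≃ₐ[ℚ] K)
    (δ : 𝓞 K) (hδ : differentIdeal ℤ (𝓞 K) = Ideal.span {δ})
    (p : ℕ) (hp : p.Prime) (hpinert : (Ideal.span {(p : 𝓞 K)}).IsPrime)
    (ψ : Ideal (𝓞 K) → ℂ)
    (hψmul : ∀ I J : Ideal (𝓞 K), I ≠ ⊥ → J ≠ ⊥ → ψ (I * J) = ψ I * ψ J)
    (hψconj : ∀ I : Ideal (𝓞 K), I ≠ ⊥ →
      ψ I * ψ (Ideal.map (RingOfIntegers.mapRingHom σ) I) = 1)
    (hψprin : ∀ x : 𝓞 K, (∀ φ : K →+* ℝ, 0 < φ (x : K)) → ψ (Ideal.span {x}) = 1)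
    (hψdiff : ψ (differentIdeal ℤ (𝓞 K)) = -1)
    (n : ℕ) :
    ({ν : K | (∀ φ : K →+* ℝ, 0 < φ ν) ∧ (∃ m : 𝓞 K, (m : K) = ν * (δ : K)) ∧
        Algebra.trace ℚ K ν = (n : ℚ)}).Finite ∧
    (∑ᶠ ν ∈ {ν : K | (∀ φ : K →+* ℝ, 0 < φ ν) ∧ (∃ m : 𝓞 K, (m : K) = ν * (δ : K)) ∧
        Algebra.trace ℚ K ν = (n : ℚ)},
      ∑ᶠ I ∈ {I : Ideal (𝓞 K) | I ≠ ⊥ ∧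
          (∃ m : 𝓞 K, (m : K) = ν * (δ : K) ∧ I ∣ Ideal.span {m}) ∧
          ¬(Ideal.span {(p : 𝓞 K)} ∣ I)}, ψ I) = 0 := by
  have hδ0 := ne_zero_of_differentIdeal_eq_span hδ
  refine ⟨finite_totallyPosOfTrace htotallyreal hδ0 n, ?_⟩
  have hPσ : (Ideal.span {(p : 𝓞 K)}).map (RingOfIntegers.mapRingHom (σ : K →+* K)) =
      Ideal.span {(p : 𝓞 K)} := by
    rw [Ideal.map_span, Set.image_singleton, map_natCast]
  have hP : Prime (Ideal.span {(p : 𝓞 K)}) :=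
    Ideal.prime_of_isPrime (by simpa using hp.ne_zero) hpinert
  have hψP : ψ (Ideal.span {(p : 𝓞 K)}) = 1 := hψprin _ fun φ => by simpa using hp.pos
  refine finsum_mem_eq_zero_of_map_eq_neg (bijOn_totallyPosOfTrace hδ σ n) fun ν hν => ?_
  obtain ⟨m, hm⟩ := hν.2.1
  obtain ⟨m', hm'⟩ := exists_coe_eq_map_mul hδ σ hν.2.1
  have hm0 : m ≠ 0 := by
    rintro rfl
    exact mul_ne_zero (ne_zero_of_forall_pos htotallyreal hν.1)
      ((RingOfIntegers.coe_ne_zero_iff).mpr hδ0) (by simpa using hm.symm)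
  rw [setOf_exists_dvd_span_and_not_dvd_eq _ hm, setOf_exists_dvd_span_and_not_dvd_eq _ hm',
    span_singleton_eq_map_span_singleton hδ σ hm hm']
  exact finsum_dvd_map_and_not_dvd_eq_neg hψmul (RingOfIntegers.mapRingEquiv (σ : K ≃+* K))
    hψconj hP hPσ hψP (by simpa using hm0)
    (apply_span_eq_neg_one hδ hψmul hψprin hψdiff hν.1 hm hm0)

/-- Vanishing of the `n`-th Fourier coefficient of the diagonal restriction of the
`p`-stabilised Hilbert Eisenstein series `E₁⁽ᵖ⁾(1, ψ)`: with `K`, `σ`, `δ`, `p`, `ψ`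
as in the previous statement, for every `n ≥ 1` the set
`S_n = {ν totally positive : νδ ∈ 𝓞, Tr(ν) = n}` is finite and
`Σ_{ν ∈ S_n} Σ_{I ∣ (νδ)𝓞, p𝓞 ∤ I} ψ(I) = 0`. -/
theorem stmt11 (K : Type*) [Field K] [NumberField K]
    (hdeg : Module.finrank ℚ K = 2)
    (htotallyreal : ∀ φ : K →+* ℂ, ∀ x : K, (φ x).im = 0)
    (σ : K ≃ₐ[ℚ] K) (hσ : σ ≠ AlgEquiv.refl)
    (δ : 𝓞 K) (hδ : differentIdeal ℤ (𝓞 K) = Ideal.span {δ})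
    (p : ℕ) (hp : p.Prime) (hpinert : (Ideal.span {(p : 𝓞 K)}).IsPrime)
    (ψ : Ideal (𝓞 K) → ℂ)
    (hψmul : ∀ I J : Ideal (𝓞 K), I ≠ ⊥ → J ≠ ⊥ → ψ (I * J) = ψ I * ψ J)
    (hψconj : ∀ I : Ideal (𝓞 K), I ≠ ⊥ →
      ψ I * ψ (Ideal.map (RingOfIntegers.mapRingHom σ) I) = 1)
    (hψprin : ∀ x : 𝓞 K, (∀ φ : K →+* ℝ, 0 < φ (x : K)) → ψ (Ideal.span {x}) = 1)
    (hψdiff : ψ (differentIdeal ℤ (𝓞 K)) = -1)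
    (n : ℕ) (hn : 1 ≤ n) :
    ({ν : K | (∀ φ : K →+* ℝ, 0 < φ ν) ∧ (∃ m : 𝓞 K, (m : K) = ν * (δ : K)) ∧
        Algebra.trace ℚ K ν = (n : ℚ)}).Finite ∧
    (∑ᶠ ν ∈ {ν : K | (∀ φ : K →+* ℝ, 0 < φ ν) ∧ (∃ m : 𝓞 K, (m : K) = ν * (δ : K)) ∧
        Algebra.trace ℚ K ν = (n : ℚ)},
      ∑ᶠ I ∈ {I : Ideal (𝓞 K) | I ≠ ⊥ ∧
          (∃ m : 𝓞 K, (m : K) = ν * (δ : K) ∧ I ∣ Ideal.span {m}) ∧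
          ¬(Ideal.span {(p : 𝓞 K)} ∣ I)}, ψ I) = 0 :=
  stmt11_general K htotallyreal σ δ hδ p hp hpinert ψ hψmul hψconj hψprin hψdiff n
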